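/- With D = ((1/α)((1/α²)−1)(σ₁/σ₂) H_dig H_digᵀ + (3/2) D_L) ⊗ I_n and P defined by α⁻¹P = D − AᵀA, the matrix P satisfies P ⪰ ((1/α²)−1)(σ₁/σ₂) H Hᵀ − (α/4) AᵀA, provided α ∈ (0,1], σ₁, σ₂ > 0, H = H_dig ⊗ I_n, A = A_in ⊗ I_n, and 2 D_L ⪰ A_inᵀ A_in. -/

import Mathlib

/-!
Every matrix involved is a Kronecker product with `Iₙ`, and `X ↦ X ⊗ Iₙ` is linear and
multiplicative, so `H Hᵀ = (H_dig H_digᵀ) ⊗ Iₙ` and `AᵀA = (A_inᵀ A_in) ⊗ Iₙ`. The `H_dig H_digᵀ`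
terms then cancel exactly and the gap is `(3α/4) (2 D_L − A_inᵀ A_in) ⊗ Iₙ`, a Kronecker product
of positive semidefinite matrices.
-/

open Matrix
open scoped Kronecker

namespace Matrix

variable {l m n p : Type*} {α : Type*}

theorem sub_kronecker [NonUnitalNonAssocRing α] (A₁ A₂ : Matrix l m α) (B : Matrix n p α) :
    (A₁ - A₂) ⊗ₖ B = A₁ ⊗ₖ B - A₂ ⊗ₖ B := by
  ext ⟨i, i'⟩ ⟨j, j'⟩
  simp only [kroneckerMap_apply, sub_apply, sub_mul]

theorem transpose_kronecker_one [MulZeroOneClass α] [DecidableEq n] (M : Matrix l m α) :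
    (M ⊗ₖ (1 : Matrix n n α))ᵀ = Mᵀ ⊗ₖ 1 := by
  rw [← kroneckerMap_transpose, transpose_one]

theorem kronecker_one_mul_kronecker_one [CommSemiring α] [Fintype m] [Fintype n] [DecidableEq n]
    (M : Matrix l m α) (N : Matrix m p α) :
    (M ⊗ₖ (1 : Matrix n n α)) * (N ⊗ₖ (1 : Matrix n n α)) = (M * N) ⊗ₖ 1 := by
  rw [← mul_kronecker_mul, mul_one]

end Matrix

theorem matrix_design_condition_general {l n : ℕ} {ι κ : Type*} [Fintype ι] [Fintype κ]
    (α σ₁ σ₂ : ℝ) (hα : α ∈ Set.Ioc (0 : ℝ) 1)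
    (H_dig : Matrix (Fin l) κ ℝ) (A_in : Matrix ι (Fin l) ℝ)
    (D_L : Matrix (Fin l) (Fin l) ℝ)
    (hPSD : ((2 : ℝ) • D_L - A_in.transpose * A_in).PosSemidef)
    (H : Matrix (Fin l × Fin n) (κ × Fin n) ℝ)
    (hH : H = Matrix.kroneckerMap (· * ·) H_dig (1 : Matrix (Fin n) (Fin n) ℝ))
    (A : Matrix (ι × Fin n) (Fin l × Fin n) ℝ)
    (hA : A = Matrix.kroneckerMap (· * ·) A_in (1 : Matrix (Fin n) (Fin n) ℝ))
    (D : Matrix (Fin l × Fin n) (Fin l × Fin n) ℝ)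
    (hD : D = Matrix.kroneckerMap (· * ·)
        (((1 / α) * ((1 / α ^ 2) - 1) * (σ₁ / σ₂)) • (H_dig * H_dig.transpose)
          + (3 / 2 : ℝ) • D_L) (1 : Matrix (Fin n) (Fin n) ℝ))
    (P : Matrix (Fin l × Fin n) (Fin l × Fin n) ℝ)
    (hP : P = α • (D - A.transpose * A)) :
    (P - ((((1 / α ^ 2) - 1) * (σ₁ / σ₂)) • (H * H.transpose)
        - (α / 4) • (A.transpose * A))).PosSemidef := by
  obtain ⟨hα0, -⟩ := hα
  have hgap : P - ((((1 / α ^ 2) - 1) * (σ₁ / σ₂)) • (H * H.transpose)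
        - (α / 4) • (A.transpose * A))
      = ((3 * α / 4) • ((2 : ℝ) • D_L - A_in.transpose * A_in))
          ⊗ₖ (1 : Matrix (Fin n) (Fin n) ℝ) := by
    subst hP hD hH hA
    simp only [transpose_kronecker_one, kronecker_one_mul_kronecker_one, add_kronecker,
      sub_kronecker, smul_kronecker]
    match_scalars <;> field_simp <;> ring
  rw [hgap]
  exact (hPSD.smul (by positivity)).kronecker PosSemidef.one

/-- The matrix design D = ((1/α)((1/α²)−1)(σ₁/σ₂) H_dig H_digᵀ + (3/2) D_L) ⊗ Iₙ with
α⁻¹ P = D − AᵀA satisfies the convergence condition P ⪰ ((1/α²)−1)(σ₁/σ₂) H Hᵀ − (α/4) AᵀA. -/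
theorem matrix_design_condition {l n : ℕ} {ι κ : Type*} [Fintype ι] [Fintype κ]
    (α σ₁ σ₂ : ℝ) (hα : α ∈ Set.Ioc (0 : ℝ) 1) (hσ₁ : 0 < σ₁) (hσ₂ : 0 < σ₂)
    (H_dig : Matrix (Fin l) κ ℝ) (A_in : Matrix ι (Fin l) ℝ)
    (D_L : Matrix (Fin l) (Fin l) ℝ)
    (hDL : D_L = Matrix.diagonal (fun i => (A_in.transpose * A_in) i i))
    (hPSD : ((2 : ℝ) • D_L - A_in.transpose * A_in).PosSemidef)
    (H : Matrix (Fin l × Fin n) (κ × Fin n) ℝ)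
    (hH : H = Matrix.kroneckerMap (· * ·) H_dig (1 : Matrix (Fin n) (Fin n) ℝ))
    (A : Matrix (ι × Fin n) (Fin l × Fin n) ℝ)
    (hA : A = Matrix.kroneckerMap (· * ·) A_in (1 : Matrix (Fin n) (Fin n) ℝ))
    (D : Matrix (Fin l × Fin n) (Fin l × Fin n) ℝ)
    (hD : D = Matrix.kroneckerMap (· * ·)
        (((1 / α) * ((1 / α ^ 2) - 1) * (σ₁ / σ₂)) • (H_dig * H_dig.transpose)
          + (3 / 2 : ℝ) • D_L) (1 : Matrix (Fin n) (Fin n) ℝ))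
    (P : Matrix (Fin l × Fin n) (Fin l × Fin n) ℝ)
    (hP : P = α • (D - A.transpose * A)) :
    (P - ((((1 / α ^ 2) - 1) * (σ₁ / σ₂)) • (H * H.transpose)
        - (α / 4) • (A.transpose * A))).PosSemidef :=
  matrix_design_condition_general α σ₁ σ₂ hα H_dig A_in D_L hPSD H hH A hA D hD P hP
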